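/- arXiv:math/0412254 — 3 statements merged into one kernel-verified Lean document; each statement's English description precedes it below -/
import Mathlib

section
/- Let (X, μ) be a standard Borel space with an atomless Borel probability measure μ, let Φ be a countable family of partial isomorphisms of (X, μ) generating an ergodic equivalence relation R (i.e. (x, y) ∈ R iff y = m(x) for some Φ-word m, and every Borel union of R-classes is μ-null or μ-conull), and let Y ⊆ X be a Borel set with μ(Y) > 0. Then there exists a nontrivial asymptotically invariant sequence for R on (X, μ) if and only if there exists a nontrivial asymptotically invariant sequence for the restricted relation R ∩ (Y × Y) on Y equipped with the normalized measure μ_Y = μ(· ∩ Y)/μ(Y). (Existence of nontrivial asymptotically invariant sequences is invariant under stable orbit equivalence.) -/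
open MeasureTheory Filter Set
open scoped ENNReal

/-- A partial isomorphism of a standard Borel space `X`: a Borel bijection between
two Borel subsets `dom` and `ran` of `X`, with Borel inverse. -/
structure PartialIso (X : Type*) [MeasurableSpace X] where
  dom : Set X
  ran : Set X
  toFun : X → X
  invFun : X → X
  measurableSet_dom : MeasurableSet dom
  measurableSet_ran : MeasurableSet ran
  measurable_toFun : Measurable toFun
  measurable_invFun : Measurable invFun
  mapsTo : Set.MapsTo toFun dom ran
  mapsTo_inv : Set.MapsTo invFun ran dom
  left_inv : ∀ x ∈ dom, invFun (toFun x) = x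
  right_inv : ∀ y ∈ ran, toFun (invFun y) = y

namespace PartialIso

variable {X : Type*} [MeasurableSpace X]

/-- The identity as a partial isomorphism. -/
def refl (X : Type*) [MeasurableSpace X] : PartialIso X :=
  ⟨Set.univ, Set.univ, id, id, MeasurableSet.univ, MeasurableSet.univ,
   measurable_id, measurable_id, Set.mapsTo_univ _ _, Set.mapsTo_univ _ _,
   fun _ _ => rfl, fun _ _ => rfl⟩

/-- The inverse of a partial isomorphism. -/
def symm (f : PartialIso X) : PartialIso X :=
  ⟨f.ran, f.dom, f.invFun, f.toFun, f.measurableSet_ran, f.measurableSet_dom,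
   f.measurable_invFun, f.measurable_toFun, f.mapsTo_inv, f.mapsTo,
   f.right_inv, f.left_inv⟩

/-- Composition (first `f`, then `g`) of partial isomorphisms, on its natural domain. -/
def trans (f g : PartialIso X) : PartialIso X where
  dom := f.dom ∩ f.toFun ⁻¹' g.dom
  ran := g.ran ∩ g.invFun ⁻¹' f.ran
  toFun := g.toFun ∘ f.toFun
  invFun := f.invFun ∘ g.invFun
  measurableSet_dom := f.measurableSet_dom.inter (f.measurable_toFun g.measurableSet_dom)
  measurableSet_ran := g.measurableSet_ran.inter (g.measurable_invFun f.measurableSet_ran)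
  measurable_toFun := g.measurable_toFun.comp f.measurable_toFun
  measurable_invFun := f.measurable_invFun.comp g.measurable_invFun
  mapsTo := by
    rintro x ⟨hx1, hx2⟩
    refine ⟨g.mapsTo hx2, ?_⟩
    show g.invFun (g.toFun (f.toFun x)) ∈ f.ran
    rw [g.left_inv _ hx2]
    exact f.mapsTo hx1
  mapsTo_inv := by
    rintro y ⟨hy1, hy2⟩
    refine ⟨f.mapsTo_inv hy2, ?_⟩
    show f.toFun (f.invFun (g.invFun y)) ∈ g.dom
    rw [f.right_inv _ hy2]
    exact g.mapsTo_inv hy1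
  left_inv := by
    rintro x ⟨hx1, hx2⟩
    show f.invFun (g.invFun (g.toFun (f.toFun x))) = x
    rw [g.left_inv _ hx2, f.left_inv _ hx1]
  right_inv := by
    rintro y ⟨hy1, hy2⟩
    show g.toFun (f.toFun (f.invFun (g.invFun y))) = y
    rw [f.right_inv _ hy2, g.right_inv _ hy1]

/-- A partial isomorphism is nonsingular for `μ` (is a partial isomorphism of `(X, μ)`)
if it maps null sets inside its domain exactly to null sets. -/
def Nonsingular (μ : Measure X) (f : PartialIso X) : Prop :=
  ∀ A ⊆ f.dom, MeasurableSet A → (μ A = 0 ↔ μ (f.toFun '' A) = 0)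

/-- The graph of the partial isomorphism `f` is contained in the relation `R`. -/
def IsInnerOf (f : PartialIso X) (R : Set (X × X)) : Prop :=
  ∀ x ∈ f.dom, (x, f.toFun x) ∈ R

end PartialIso

variable {X : Type*} [MeasurableSpace X]

/-- `IsWord Φ m k` : `m` is a `Φ`-word of length `k`, i.e. a composition of `k` elements
of `Φ` and their inverses (on its natural domain). -/
def IsWord (Φ : Set (PartialIso X)) (m : PartialIso X) (k : ℕ) : Prop :=
  ∃ l : List (PartialIso X), l.length = k ∧
    (∀ φ ∈ l, φ ∈ Φ ∨ ∃ ψ ∈ Φ, φ = ψ.symm) ∧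
    m = l.foldl PartialIso.trans (PartialIso.refl X)

/-- `wordDistLE Φ μ A B r` : the essential distance `d_Φ(A, B)` is at most `r`, i.e. the
set of points of `A` sent into `B` by some `Φ`-word of length at most `r` has positive
measure. -/
def wordDistLE (Φ : Set (PartialIso X)) (μ : Measure X) (A B : Set X) (r : ℕ) : Prop :=
  0 < μ {x ∈ A | ∃ m k, IsWord Φ m k ∧ k ≤ r ∧ x ∈ m.dom ∧ m.toFun x ∈ B}

/-- The metric-measure space `(X, d_Φ, μ)` is concentrated. -/
def Concentrated (Φ : Set (PartialIso X)) (μ : Measure X) : Prop :=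
  ∀ δ : ℝ≥0∞, 0 < δ → ∃ r : ℕ, ∀ A B : Set X, MeasurableSet A → MeasurableSet B →
    δ ≤ μ A → δ ≤ μ B → wordDistLE Φ μ A B r

/-- The metric `d_Φ` is ergodic relative to `μ` : any two sets of positive measure are at
finite essential distance. -/
def MetricErgodic (Φ : Set (PartialIso X)) (μ : Measure X) : Prop :=
  ∀ A B : Set X, MeasurableSet A → MeasurableSet B → 0 < μ A → 0 < μ B →
    ∃ r : ℕ, wordDistLE Φ μ A B r

/-- A sequence of Borel sets is asymptotically invariant for the family `Φ`. -/
def AsympInvariant (Φ : Set (PartialIso X)) (μ : Measure X) (A : ℕ → Set X) : Prop :=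
  ∀ m k, IsWord Φ m k →
    Tendsto (fun n => μ (m.toFun '' (A n ∩ m.dom) \ A n)) atTop (nhds 0)

/-- A sequence of Borel sets is nontrivial: measures uniformly bounded away from `0` and `1`. -/
def NontrivialSeq (μ : Measure X) (A : ℕ → Set X) : Prop :=
  ∃ δ : ℝ≥0∞, 0 < δ ∧ ∀ n, δ ≤ μ (A n) ∧ μ (A n) ≤ 1 - δ

/-- A countable Borel equivalence relation on `X`. -/
def IsCountableBorelER (R : Set (X × X)) : Prop :=
  MeasurableSet R ∧ Equivalence (fun x y => (x, y) ∈ R) ∧ ∀ x, {y | (x, y) ∈ R}.Countable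

/-- `μ` is quasi-invariant for `R` : partial isomorphisms of `R` map null sets to null sets. -/
def QuasiInvariant (μ : Measure X) (R : Set (X × X)) : Prop :=
  ∀ f : PartialIso X, f.IsInnerOf R → ∀ N ⊆ f.dom, MeasurableSet N → μ N = 0 →
    μ (f.toFun '' N) = 0

/-- `μ` is invariant for `R` : partial isomorphisms of `R` preserve the measure. -/
def InvariantMeasure (μ : Measure X) (R : Set (X × X)) : Prop :=
  ∀ f : PartialIso X, f.IsInnerOf R → ∀ A ⊆ f.dom, MeasurableSet A →
    μ (f.toFun '' A) = μ A

/-- `R` is ergodic for `μ` : every Borel saturated set is null or conull. -/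
def ErgodicRel (μ : Measure X) (R : Set (X × X)) : Prop :=
  ∀ A : Set X, MeasurableSet A → (∀ x ∈ A, ∀ y, (x, y) ∈ R → y ∈ A) →
    μ A = 0 ∨ μ Aᶜ = 0

/-- `Φ` is a graphing of `R` : a family of partial isomorphisms of `R` whose words connect
almost every pair of equivalent points. -/
def IsGraphing (Φ : Set (PartialIso X)) (μ : Measure X) (R : Set (X × X)) : Prop :=
  (∀ φ ∈ Φ, φ.IsInnerOf R) ∧
  ∀ᵐ x ∂μ, ∀ y, (x, y) ∈ R → ∃ m k, IsWord Φ m k ∧ x ∈ m.dom ∧ m.toFun x = y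

/-- A sequence of Borel sets is asymptotically invariant for the relation `R`. -/
def AsympInvariantRel (μ : Measure X) (R : Set (X × X)) (A : ℕ → Set X) : Prop :=
  ∀ f : PartialIso X, f.IsInnerOf R →
    Tendsto (fun n => μ (f.toFun '' (A n ∩ f.dom) \ A n)) atTop (nhds 0)

/-- `R` is strongly ergodic : every asymptotically invariant sequence is trivial. -/
def StronglyErgodic (μ : Measure X) (R : Set (X × X)) : Prop :=
  ¬ ∃ A : ℕ → Set X, (∀ n, MeasurableSet (A n)) ∧ AsympInvariantRel μ R A ∧
    NontrivialSeq μ A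

/-- The boundary `∂_Φ A` of a set `A` with respect to the family `Φ`. -/
def bdry (Φ : Set (PartialIso X)) (A : Set X) : Set X :=
  (⋃ φ ∈ Φ, φ.toFun '' (A ∩ φ.dom) ∪ φ.invFun '' (A ∩ φ.ran)) \ A

/-- A vanishing Følner sequence for the family `Φ`. -/
def VanishingFolner (Φ : Set (PartialIso X)) (μ : Measure X) (A : ℕ → Set X) : Prop :=
  (∀ n, MeasurableSet (A n)) ∧ (∀ n, 0 < μ (A n)) ∧
  Tendsto (fun n => μ (A n)) atTop (nhds 0) ∧
  Tendsto (fun n => μ (bdry Φ (A n)) / μ (A n)) atTop (nhds 0)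

/-- The equivalence relation generated by the family `Φ` : `(x, y) ∈ RGen Φ` iff `y = m x`
for some `Φ`-word `m`. -/
def RGen (Φ : Set (PartialIso X)) : Set (X × X) :=
  {p | ∃ m k, IsWord Φ m k ∧ p.1 ∈ m.dom ∧ m.toFun p.1 = p.2}

/-!
By ergodicity the `RGen Φ`-saturation of `Y` is conull, so up to a null set `X` splits into
countably many Borel pieces `P j`, each carried into `Y` by a word `e j`, with `P 0 = Y` and
`e 0 = id`. Partial isomorphisms of the relation send null sets to null sets, hence are uniformly
absolutely continuous: they send sets of vanishing measure to sets of vanishing measure.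

If `A` is a nontrivial asymptotically invariant sequence, so is `A ∩ Y` in `Y`: were `μ (A n ∩ Y)`
to vanish along a subsequence, so would every `e j '' (A n ∩ P j) ⊆ (e j '' A n \ A n) ∪ (A n ∩ Y)`,
hence every `A n ∩ P j` and finally `A n`; the same holds for the complements. Conversely `B ⊆ Y`
extends to `A = ⋃ j, P j ∩ (e j)⁻¹' B`; on the part of `dom f` going from `P i` to `P j`, the
defect of `A` under `f` is the `(e j)⁻¹`-image of the defect of `B` under `e j ∘ f ∘ (e i)⁻¹`.
-/

open PartialIso
open scoped ProbabilityTheory Function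
open ProbabilityTheory (cond_apply cond_mul_eq_inter cond_isProbabilityMeasure)

namespace PartialIso

protected theorem ext {f g : PartialIso X} (hdom : f.dom = g.dom) (hran : f.ran = g.ran)
    (htoFun : f.toFun = g.toFun) (hinvFun : f.invFun = g.invFun) : f = g := by
  cases f; cases g; simp_all

@[simp] theorem symm_dom (f : PartialIso X) : f.symm.dom = f.ran := rfl

@[simp] theorem symm_toFun (f : PartialIso X) : f.symm.toFun = f.invFun := rfl

@[simp] theorem symm_invFun (f : PartialIso X) : f.symm.invFun = f.toFun := rfl

theorem symm_trans (f g : PartialIso X) : (f.trans g).symm = g.symm.trans f.symm := rfl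

@[simp] theorem mem_trans_dom {f g : PartialIso X} {x : X} :
    x ∈ (f.trans g).dom ↔ x ∈ f.dom ∧ f.toFun x ∈ g.dom := Iff.rfl

@[simp] theorem trans_toFun (f g : PartialIso X) : (f.trans g).toFun = g.toFun ∘ f.toFun := rfl

theorem trans_assoc (f g h : PartialIso X) : (f.trans g).trans h = f.trans (g.trans h) := by
  refine PartialIso.ext ?_ ?_ rfl rfl <;> ext <;> simp [trans, and_assoc]

@[simp] theorem refl_trans (f : PartialIso X) : (refl X).trans f = f := by
  refine PartialIso.ext ?_ ?_ rfl rfl <;> ext <;> simp [refl, trans]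

@[simp] theorem trans_refl (f : PartialIso X) : f.trans (refl X) = f := by
  refine PartialIso.ext ?_ ?_ rfl rfl <;> ext <;> simp [refl, trans]

theorem foldl_trans (l : List (PartialIso X)) (a : PartialIso X) :
    l.foldl trans a = a.trans (l.foldl trans (refl X)) := by
  induction l generalizing a with
  | nil => simp
  | cons b l ih =>
    rw [List.foldl_cons, List.foldl_cons, ih (a.trans b), ih ((refl X).trans b), refl_trans,
      trans_assoc]

theorem foldl_trans_append (l l' : List (PartialIso X)) :
    (l ++ l').foldl trans (refl X) = (l.foldl trans (refl X)).trans (l'.foldl trans (refl X)) := by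
  rw [List.foldl_append, foldl_trans]

theorem symm_foldl_trans (l : List (PartialIso X)) :
    (l.foldl trans (refl X)).symm = (l.map symm).reverse.foldl trans (refl X) := by
  induction l with
  | nil => rfl
  | cons b l ih =>
    rw [List.foldl_cons, foldl_trans, refl_trans, symm_trans, ih, List.map_cons,
      List.reverse_cons, foldl_trans_append]
    simp

theorem image_inter_dom (f : PartialIso X) (S : Set X) :
    f.toFun '' (S ∩ f.dom) = f.ran ∩ f.invFun ⁻¹' S := by
  ext y
  constructor
  · rintro ⟨x, ⟨hxS, hx⟩, rfl⟩
    exact ⟨f.mapsTo hx, by rwa [mem_preimage, f.left_inv x hx]⟩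
  · rintro ⟨hy, hyS⟩
    exact ⟨f.invFun y, ⟨hyS, f.mapsTo_inv hy⟩, f.right_inv y hy⟩

theorem image_eq {f : PartialIso X} {S : Set X} (hS : S ⊆ f.dom) :
    f.toFun '' S = f.ran ∩ f.invFun ⁻¹' S := by
  rw [← image_inter_dom, inter_eq_left.2 hS]

theorem measurableSet_image {f : PartialIso X} {S : Set X} (hS : S ⊆ f.dom)
    (hSm : MeasurableSet S) : MeasurableSet (f.toFun '' S) := by
  rw [image_eq hS]
  exact f.measurableSet_ran.inter (f.measurable_invFun hSm)

theorem image_subset_ran {f : PartialIso X} {S : Set X} (hS : S ⊆ f.dom) :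
    f.toFun '' S ⊆ f.ran :=
  image_subset_iff.2 fun _ hx => f.mapsTo (hS hx)

theorem symm_image_image {f : PartialIso X} {S : Set X} (hS : S ⊆ f.dom) :
    f.invFun '' (f.toFun '' S) = S := by
  rw [image_image]
  exact (image_congr fun x hx => f.left_inv x (hS hx)).trans (image_id S)

def ofSet (S : Set X) (hS : MeasurableSet S) : PartialIso X :=
  ⟨S, S, id, id, hS, hS, measurable_id, measurable_id, mapsTo_id S, mapsTo_id S,
   fun _ _ => rfl, fun _ _ => rfl⟩

@[simp] theorem ofSet_dom {S : Set X} (hS : MeasurableSet S) : (ofSet S hS).dom = S := rfl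

@[simp] theorem ofSet_toFun {S : Set X} (hS : MeasurableSet S) : (ofSet S hS).toFun = id := rfl

theorem Nonsingular.symm {μ : Measure X} {f : PartialIso X} (hf : f.Nonsingular μ) :
    f.symm.Nonsingular μ := fun A hA hAm => by
  have h := hf _ (f.symm.image_subset_ran hA) (f.symm.measurableSet_image hA hAm)
  have hinv := f.symm.symm_image_image hA
  simp only [symm_toFun, symm_invFun] at h hinv ⊢
  rw [hinv] at h
  exact h.symm

theorem Nonsingular.trans {μ : Measure X} {f g : PartialIso X} (hf : f.Nonsingular μ)
    (hg : g.Nonsingular μ) : (f.trans g).Nonsingular μ := fun A hA hAm => by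
  have hAf : A ⊆ f.dom := hA.trans inter_subset_left
  have hAg : f.toFun '' A ⊆ g.dom := image_subset_iff.2 fun _ hx => (hA hx).2
  rw [hf A hAf hAm, hg _ hAg (measurableSet_image hAf hAm), image_image]
  rfl

theorem nonsingular_refl (μ : Measure X) : (refl X).Nonsingular μ := fun A _ _ => by
  simp [refl]

theorem isInnerOf_ofSet {R : Set (X × X)} (hR : Equivalence fun x y => (x, y) ∈ R) {S : Set X}
    (hS : MeasurableSet S) : (ofSet S hS).IsInnerOf R :=
  fun x _ => hR.refl x

theorem IsInnerOf.symm {R : Set (X × X)} {f : PartialIso X} (hf : f.IsInnerOf R)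
    (hR : Equivalence fun x y => (x, y) ∈ R) : f.symm.IsInnerOf R := fun y hy => by
  have h := hf _ (f.mapsTo_inv hy)
  rw [f.right_inv y hy] at h
  exact hR.symm h

theorem IsInnerOf.trans {R : Set (X × X)} {f g : PartialIso X} (hf : f.IsInnerOf R)
    (hR : Equivalence fun x y => (x, y) ∈ R) (hg : g.IsInnerOf R) : (f.trans g).IsInnerOf R :=
  fun x hx => hR.trans (hf x hx.1) (hg _ hx.2)

end PartialIso

section Words

variable {Φ : Set (PartialIso X)}

theorem isWord_refl (Φ : Set (PartialIso X)) : IsWord Φ (refl X) 0 :=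
  ⟨[], rfl, by simp, rfl⟩

theorem IsWord.trans {m m' : PartialIso X} {k k' : ℕ} (h : IsWord Φ m k)
    (h' : IsWord Φ m' k') : IsWord Φ (m.trans m') (k + k') := by
  obtain ⟨l, rfl, hl, rfl⟩ := h
  obtain ⟨l', rfl, hl', rfl⟩ := h'
  refine ⟨l ++ l', List.length_append, fun φ hφ => ?_, (foldl_trans_append l l').symm⟩
  rcases List.mem_append.1 hφ with hφ | hφ
  exacts [hl φ hφ, hl' φ hφ]

theorem IsWord.symm {m : PartialIso X} {k : ℕ} (h : IsWord Φ m k) : IsWord Φ m.symm k := by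
  obtain ⟨l, rfl, hl, rfl⟩ := h
  refine ⟨(l.map PartialIso.symm).reverse, by simp, ?_, symm_foldl_trans l⟩
  simp only [List.mem_reverse, List.mem_map]
  rintro _ ⟨ψ, hψ, rfl⟩
  rcases hl ψ hψ with hψΦ | ⟨χ, hχ, rfl⟩
  · exact Or.inr ⟨ψ, hψΦ, rfl⟩
  · exact Or.inl hχ

theorem IsWord.isInnerOf {m : PartialIso X} {k : ℕ} (h : IsWord Φ m k) :
    m.IsInnerOf (RGen Φ) :=
  fun _ hx => ⟨m, k, h, hx, rfl⟩

theorem IsWord.nonsingular {μ : Measure X} (hns : ∀ φ ∈ Φ, φ.Nonsingular μ)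
    {m : PartialIso X} {k : ℕ} (h : IsWord Φ m k) : m.Nonsingular μ := by
  obtain ⟨l, -, hl, rfl⟩ := h
  induction l with
  | nil => exact nonsingular_refl μ
  | cons b l ih =>
    rw [List.foldl_cons, foldl_trans, refl_trans]
    refine Nonsingular.trans ?_ (ih fun φ hφ => hl φ (List.mem_cons_of_mem b hφ))
    rcases hl b List.mem_cons_self with hb | ⟨ψ, hψ, rfl⟩
    exacts [hns b hb, (hns ψ hψ).symm]

theorem equivalence_rGen (Φ : Set (PartialIso X)) : Equivalence fun x y => (x, y) ∈ RGen Φ where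
  refl x := ⟨refl X, 0, isWord_refl Φ, mem_univ x, rfl⟩
  symm := by
    rintro x _ ⟨m, k, hm, (hx : x ∈ m.dom), (rfl : m.toFun x = _)⟩
    exact ⟨m.symm, k, hm.symm, m.mapsTo hx, m.left_inv x hx⟩
  trans := by
    rintro x _ _ ⟨m, k, hm, (hx : x ∈ m.dom), (rfl : m.toFun x = _)⟩
      ⟨m', k', hm', (hy : m.toFun x ∈ m'.dom), (rfl : m'.toFun (m.toFun x) = _)⟩
    exact ⟨m.trans m', k + k', hm.trans hm', ⟨hx, hy⟩, rfl⟩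

theorem countable_setOf_isWord (hcnt : Φ.Countable) :
    {m : PartialIso X | ∃ k, IsWord Φ m k}.Countable := by
  have hΦ : (Φ ∪ symm '' Φ).Countable := hcnt.union (hcnt.image _)
  have := hΦ.to_subtype
  refine ((countable_range (List.map ((↑) : ↥(Φ ∪ symm '' Φ) → PartialIso X))).image
    fun l => l.foldl PartialIso.trans (refl X)).mono ?_
  rintro _ ⟨k, l, -, hl, rfl⟩
  refine ⟨l, ?_, rfl⟩
  rw [range_list_map_coe]
  intro φ hφ
  rcases hl φ hφ with h | ⟨ψ, hψ, rfl⟩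
  exacts [Or.inl h, Or.inr ⟨ψ, hψ, rfl⟩]

theorem quasiInvariant_rGen {μ : Measure X} (hcnt : Φ.Countable)
    (hns : ∀ φ ∈ Φ, φ.Nonsingular μ) : QuasiInvariant μ (RGen Φ) := by
  intro f hf S hS hSm hS0
  have hcover : f.toFun '' S ⊆
      ⋃ m ∈ {m : PartialIso X | ∃ k, IsWord Φ m k}, m.toFun '' (S ∩ m.dom) := by
    rintro _ ⟨x, hx, rfl⟩
    obtain ⟨m, k, hm, hxm, hmx⟩ := hf x (hS hx)
    exact mem_biUnion ⟨k, hm⟩ ⟨x, ⟨hx, hxm⟩, hmx⟩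
  refine measure_mono_null hcover ((measure_biUnion_null_iff (countable_setOf_isWord hcnt)).2 ?_)
  rintro m ⟨k, hm⟩
  exact (hm.nonsingular hns _ inter_subset_right (hSm.inter m.measurableSet_dom)).1
    (measure_mono_null inter_subset_left hS0)

theorem exists_seq_covering_rGen (hcnt : Φ.Countable) :
    ∃ M : ℕ → PartialIso X, M 0 = refl X ∧ (∀ j, (M j).IsInnerOf (RGen Φ)) ∧
      ∀ x y, (x, y) ∈ RGen Φ → ∃ j, x ∈ (M j).dom ∧ (M j).toFun x = y := by
  obtain ⟨g, hg⟩ := (countable_setOf_isWord hcnt).exists_eq_range ⟨refl X, 0, isWord_refl Φ⟩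
  refine ⟨fun | 0 => refl X | j + 1 => g j, rfl, ?_, ?_⟩
  · rintro (_ | j)
    · exact (isWord_refl Φ).isInnerOf
    · obtain ⟨k, hk⟩ : g j ∈ {m : PartialIso X | ∃ k, IsWord Φ m k} := hg ▸ mem_range_self j
      exact hk.isInnerOf
  · rintro x y ⟨m, k, hm, hx, hmx⟩
    obtain ⟨j, rfl⟩ : m ∈ range g := hg ▸ ⟨k, hm⟩
    exact ⟨j + 1, hx, hmx⟩

end Words

theorem MeasureTheory.Measure.AbsolutelyContinuous.tendsto_nhds_zero {α ι : Type*}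
    [MeasurableSpace α] {μ ν : Measure α} [IsFiniteMeasure ν] [SigmaFinite μ] (h : ν ≪ μ)
    {l : Filter ι} {s : ι → Set α} (hs : Tendsto (μ ∘ s) l (nhds 0)) :
    Tendsto (ν ∘ s) l (nhds 0) := by
  rw [← Measure.withDensity_rnDeriv_eq ν μ h]
  simp only [Function.comp_def, withDensity_apply']
  exact tendsto_setLIntegral_zero (Measure.lintegral_rnDeriv_lt_top ν μ).ne hs

theorem PartialIso.tendsto_measure_image {μ : Measure X} [IsFiniteMeasure μ] {f : PartialIso X}
    (hf : ∀ N ⊆ f.dom, MeasurableSet N → μ N = 0 → μ (f.toFun '' N) = 0)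
    {s : ℕ → Set X} (hs : ∀ n, s n ⊆ f.dom) (h : Tendsto (fun n => μ (s n)) atTop (nhds 0)) :
    Tendsto (fun n => μ (f.toFun '' s n)) atTop (nhds 0) := by
  set ν := (μ.restrict f.ran).map f.invFun
  have hν : ν ≪ μ := Measure.AbsolutelyContinuous.mk fun S hS hS0 => by
    rw [Measure.map_apply f.measurable_invFun hS, Measure.restrict_apply' f.measurableSet_ran,
      inter_comm, ← image_inter_dom]
    exact hf _ inter_subset_right (hS.inter f.measurableSet_dom)
      (measure_mono_null inter_subset_left hS0)
  have hle : ∀ n, μ (f.toFun '' s n) ≤ ν (s n) := fun n => by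
    rw [image_eq (hs n), inter_comm, ← Measure.restrict_apply' f.measurableSet_ran]
    exact Measure.le_map_apply f.measurable_invFun.aemeasurable _
  exact tendsto_nhds_bot_mono' (hν.tendsto_nhds_zero h) hle

theorem tendsto_measure_of_forall_tendsto_measure_inter {μ : Measure X} [IsFiniteMeasure μ]
    {U : ℕ → Set X} (hU : ∀ j, MeasurableSet (U j)) {E : ℕ → Set X}
    (hE : ∀ n, μ (E n \ ⋃ j, U j) = 0) (h : ∀ j, Tendsto (fun n => μ (E n ∩ U j)) atTop (nhds 0)) :
    Tendsto (fun n => μ (E n)) atTop (nhds 0) := by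
  have htail : Tendsto (fun N => μ ((⋃ j, U j) \ accumulate U N)) atTop (nhds 0) := by
    have hempty : ⋂ N, (⋃ j, U j) \ accumulate U N = ∅ := by
      refine eq_empty_of_forall_notMem fun x hx => ?_
      obtain ⟨j, hj⟩ := mem_iUnion.1 (mem_iInter.1 hx 0).1
      exact (mem_iInter.1 hx j).2 (subset_accumulate hj)
    have h := tendsto_measure_iInter_atTop (μ := μ) (s := fun N => (⋃ j, U j) \ accumulate U N)
      (fun N => ((MeasurableSet.iUnion hU).diff (MeasurableSet.iUnion fun j =>
        MeasurableSet.iUnion fun (_ : j ≤ N) => hU j)).nullMeasurableSet)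
      (fun _ _ hNM => sdiff_subset_sdiff_right (monotone_accumulate hNM)) ⟨0, measure_ne_top μ _⟩
    rwa [hempty, measure_empty] at h
  rw [ENNReal.tendsto_nhds_zero] at htail ⊢
  intro ε hε
  obtain ⟨N, hN⟩ := (htail (ε / 2) (ENNReal.half_pos hε.ne')).exists
  have hsum : Tendsto (fun n => ∑ j ∈ Finset.Iic N, μ (E n ∩ U j)) atTop (nhds 0) := by
    simpa using tendsto_finsetSum (Finset.Iic N) fun j _ => h j
  filter_upwards [ENNReal.tendsto_nhds_zero.1 hsum (ε / 2) (ENNReal.half_pos hε.ne')] with n hn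
  have hcover : E n ⊆ (E n \ ⋃ j, U j) ∪ ((⋃ j, U j) \ accumulate U N) ∪
      ⋃ j ∈ Finset.Iic N, E n ∩ U j := by
    intro x hx
    by_cases hxU : x ∈ ⋃ j, U j
    · by_cases hxN : x ∈ accumulate U N
      · obtain ⟨j, hj, hxj⟩ := mem_accumulate.1 hxN
        exact Or.inr (mem_biUnion (Finset.mem_Iic.2 hj) ⟨hx, hxj⟩)
      · exact Or.inl (Or.inr ⟨hxU, hxN⟩)
    · exact Or.inl (Or.inl ⟨hx, hxU⟩)
  calc μ (E n)
      ≤ μ (E n \ ⋃ j, U j) + μ ((⋃ j, U j) \ accumulate U N) +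
          ∑ j ∈ Finset.Iic N, μ (E n ∩ U j) :=
        (measure_mono hcover).trans <| (measure_union_le _ _).trans <|
          add_le_add (measure_union_le _ _) (measure_biUnion_finset_le _ _)
    _ ≤ 0 + ε / 2 + ε / 2 := by gcongr; exact (hE n).le
    _ = ε := by rw [zero_add, ENNReal.add_halves]

theorem nontrivialSeq_iff {μ : Measure X} [IsProbabilityMeasure μ] {A : ℕ → Set X}
    (hA : ∀ n, MeasurableSet (A n)) :
    NontrivialSeq μ A ↔ ∃ δ : ℝ≥0∞, 0 < δ ∧ ∀ n, δ ≤ μ (A n) ∧ δ ≤ μ (A n)ᶜ := by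
  simp only [NontrivialSeq, prob_compl_eq_one_sub (hA _)]
  refine exists_congr fun δ => and_congr_right fun _ => forall_congr' fun n => ?_
  refine and_congr_right fun hδ => ?_
  have hfin := measure_ne_top μ (A n)
  exact (ENNReal.cancel_of_ne hfin).le_tsub_iff_le_tsub
    (ENNReal.cancel_of_ne (ne_top_of_le_ne_top hfin hδ)) prob_le_one (hδ.trans prob_le_one)

theorem ENNReal.tendsto_div_const_nhds_zero_iff {ι : Type*} {l : Filter ι} {f : ι → ℝ≥0∞}
    {c : ℝ≥0∞} (hc₀ : c ≠ 0) (hc : c ≠ ∞) :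
    Tendsto (fun i => f i / c) l (nhds 0) ↔ Tendsto f l (nhds 0) := by
  refine ⟨fun h => ?_, fun h => by simpa using ENNReal.Tendsto.div_const h (Or.inr hc₀)⟩
  simpa [ENNReal.div_mul_cancel hc₀ hc] using ENNReal.Tendsto.mul_const h (Or.inr hc)

theorem AsympInvariantRel.compl {μ : Measure X} [IsFiniteMeasure μ] {R : Set (X × X)}
    (hR : Equivalence fun x y => (x, y) ∈ R) (hq : QuasiInvariant μ R) {A : ℕ → Set X}
    (hA : AsympInvariantRel μ R A) : AsympInvariantRel μ R fun n => (A n)ᶜ := by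
  intro f hf
  have hsub : ∀ n, f.toFun '' ((A n)ᶜ ∩ f.dom) \ (A n)ᶜ ⊆
      f.toFun '' (f.invFun '' (A n ∩ f.ran) \ A n) := by
    rintro n _ ⟨⟨x, ⟨hxA, hx⟩, rfl⟩, hfx⟩
    rw [notMem_compl_iff] at hfx
    exact ⟨x, ⟨⟨f.toFun x, ⟨hfx, f.mapsTo hx⟩, f.left_inv x hx⟩, hxA⟩, rfl⟩
  refine tendsto_nhds_bot_mono' ?_ fun n => measure_mono (hsub n)
  exact f.tendsto_measure_image (hq f hf)
    (fun n => sdiff_subset.trans (f.symm.image_subset_ran inter_subset_right))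
    (hA f.symm (hf.symm hR))

-- Unnormalised: the condition is unchanged when `μ` is replaced by `μ_Y = μ / μ Y`.
def AsympInvariantOn (μ : Measure X) (R : Set (X × X)) (Y : Set X) (B : ℕ → Set X) : Prop :=
  ∀ ψ : PartialIso X, ψ.dom ⊆ Y → ψ.ran ⊆ Y → ψ.IsInnerOf R →
    Tendsto (fun n => μ (ψ.toFun '' (B n ∩ ψ.dom) \ B n)) atTop (nhds 0)

theorem AsympInvariantRel.asympInvariantOn_inter {μ : Measure X} {R : Set (X × X)}
    {A : ℕ → Set X} (hA : AsympInvariantRel μ R A) (Y : Set X) :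
    AsympInvariantOn μ R Y fun n => A n ∩ Y := by
  refine fun ψ _ hψY hψ => tendsto_nhds_bot_mono' (hA ψ hψ) fun n => measure_mono ?_
  rintro _ ⟨⟨x, ⟨⟨hxA, -⟩, hx⟩, rfl⟩, hnot⟩
  exact ⟨⟨x, ⟨hxA, hx⟩, rfl⟩, fun h => hnot ⟨h, hψY (ψ.mapsTo hx)⟩⟩

structure CompleteSectionCover (μ : Measure X) (R : Set (X × X)) (Y : Set X) where
  e : ℕ → PartialIso X
  P : ℕ → Set X
  measurableSet_P : ∀ j, MeasurableSet (P j)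
  P_subset_dom : ∀ j, P j ⊆ (e j).dom
  mapsTo : ∀ j, MapsTo (e j).toFun (P j) Y
  isInnerOf : ∀ j, (e j).IsInnerOf R
  pairwise_disjoint : Pairwise (Disjoint on P)
  measure_compl_iUnion : μ (⋃ j, P j)ᶜ = 0
  e_zero : e 0 = refl X
  P_zero : P 0 = Y

theorem exists_completeSectionCover {μ : Measure X} {R : Set (X × X)}
    (hR : Equivalence fun x y => (x, y) ∈ R) (herg : ErgodicRel μ R) {Y : Set X}
    (hY : MeasurableSet Y) (hYpos : 0 < μ Y) (M : ℕ → PartialIso X) (hM0 : M 0 = refl X)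
    (hMR : ∀ j, (M j).IsInnerOf R)
    (hRM : ∀ x y, (x, y) ∈ R → ∃ j, x ∈ (M j).dom ∧ (M j).toFun x = y) :
    Nonempty (CompleteSectionCover μ R Y) := by
  set D : ℕ → Set X := fun j => (M j).dom ∩ (M j).toFun ⁻¹' Y
  have hD : ∀ j, MeasurableSet (D j) := fun j =>
    (M j).measurableSet_dom.inter ((M j).measurable_toFun hY)
  have hD0 : D 0 = Y := by simp [D, hM0, PartialIso.refl]
  have hsat : ∀ x ∈ ⋃ j, D j, ∀ y, (x, y) ∈ R → y ∈ ⋃ j, D j := by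
    simp only [mem_iUnion]
    rintro x ⟨j, hx, hxY⟩ y hxy
    obtain ⟨j', hy, hyx⟩ := hRM y _ (hR.trans (hR.symm hxy) (hMR j x hx))
    exact ⟨j', hy, (congrArg (· ∈ Y) hyx).mpr hxY⟩
  have hconull : μ (⋃ j, D j)ᶜ = 0 :=
    (herg _ (MeasurableSet.iUnion hD) hsat).resolve_left fun h =>
      hYpos.ne' (measure_mono_null (hD0 ▸ subset_iUnion D 0) h)
  exact ⟨{ e := M
           P := disjointed D
           measurableSet_P := MeasurableSet.disjointed hD
           P_subset_dom := fun j => (disjointed_subset D j).trans inter_subset_left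
           mapsTo := fun j _ hx => (disjointed_subset D j hx).2
           isInnerOf := hMR
           pairwise_disjoint := disjoint_disjointed D
           measure_compl_iUnion := by rwa [iUnion_disjointed]
           e_zero := hM0
           P_zero := by rw [disjointed_zero, hD0] }⟩

namespace CompleteSectionCover

variable {μ : Measure X} {R : Set (X × X)} {Y : Set X}

theorem tendsto_measure_of_tendsto_measure_inter (C : CompleteSectionCover μ R Y)
    [IsFiniteMeasure μ] (hR : Equivalence fun x y => (x, y) ∈ R) (hq : QuasiInvariant μ R)
    {A : ℕ → Set X} (hA : AsympInvariantRel μ R A)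
    (hAY : Tendsto (fun n => μ (A n ∩ Y)) atTop (nhds 0)) :
    Tendsto (fun n => μ (A n)) atTop (nhds 0) := by
  refine tendsto_measure_of_forall_tendsto_measure_inter C.measurableSet_P
    (fun n => measure_mono_null (sdiff_subset_compl _ _) C.measure_compl_iUnion) fun j => ?_
  set e := C.e j
  have hP : ∀ n, A n ∩ C.P j ⊆ e.dom := fun n => inter_subset_right.trans (C.P_subset_dom j)
  have hsub : ∀ n, e.toFun '' (A n ∩ C.P j) ⊆ (e.toFun '' (A n ∩ e.dom) \ A n) ∪ (A n ∩ Y) := by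
    rintro n _ ⟨x, ⟨hxA, hxP⟩, rfl⟩
    by_cases hex : e.toFun x ∈ A n
    · exact Or.inr ⟨hex, C.mapsTo j hxP⟩
    · exact Or.inl ⟨⟨x, ⟨hxA, C.P_subset_dom j hxP⟩, rfl⟩, hex⟩
  have himage : Tendsto (fun n => μ (e.toFun '' (A n ∩ C.P j))) atTop (nhds 0) :=
    tendsto_nhds_bot_mono' (by simpa using (hA e (C.isInnerOf j)).add hAY)
      fun n => (measure_mono (hsub n)).trans (measure_union_le _ _)
  have h := e.symm.tendsto_measure_image (hq _ ((C.isInnerOf j).symm hR))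
    (fun n => e.image_subset_ran (hP n)) himage
  simpa only [symm_toFun, e.symm_image_image (hP _)] using h

theorem exists_forall_eventually_le_cond (C : CompleteSectionCover μ R Y) [IsFiniteMeasure μ]
    (hR : Equivalence fun x y => (x, y) ∈ R) (hq : QuasiInvariant μ R) (hY : MeasurableSet Y)
    {A : ℕ → Set X} (hA : AsympInvariantRel μ R A) {δ : ℝ≥0∞} (hδ : 0 < δ)
    (hAδ : ∀ n, δ ≤ μ (A n)) : ∃ c : ℝ≥0∞, 0 < c ∧ ∀ᶠ n in atTop, c ≤ μ[A n|Y] := by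
  by_contra! h
  obtain ⟨φ, hφ, hφA⟩ := extraction_forall_of_frequently fun k =>
    h (k : ℝ≥0∞)⁻¹ (ENNReal.inv_pos.2 (ENNReal.natCast_ne_top k))
  have hcond : Tendsto (fun k => μ[A (φ k)|Y]) atTop (nhds 0) :=
    tendsto_nhds_bot_mono' ENNReal.tendsto_inv_nat_nhds_zero fun k => (hφA k).le
  have hinter : Tendsto (fun k => μ (A (φ k) ∩ Y)) atTop (nhds 0) := by
    simpa [cond_mul_eq_inter hY, inter_comm] using
      ENNReal.Tendsto.mul_const hcond (Or.inr (measure_ne_top μ Y))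
  have h0 := C.tendsto_measure_of_tendsto_measure_inter hR hq
    (fun f hf => (hA f hf).comp hφ.tendsto_atTop) hinter
  exact hδ.not_ge (ge_of_tendsto' h0 fun k => hAδ (φ k))

theorem exists_asympInvariantOn (C : CompleteSectionCover μ R Y) [IsProbabilityMeasure μ]
    (hR : Equivalence fun x y => (x, y) ∈ R) (hq : QuasiInvariant μ R) (hY : MeasurableSet Y)
    (hY₀ : μ Y ≠ 0) {A : ℕ → Set X} (hAm : ∀ n, MeasurableSet (A n))
    (hA : AsympInvariantRel μ R A) (hAnt : NontrivialSeq μ A) :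
    ∃ B : ℕ → Set X, (∀ n, MeasurableSet (B n) ∧ B n ⊆ Y) ∧
      AsympInvariantOn μ R Y B ∧ NontrivialSeq μ[|Y] B := by
  obtain ⟨δ, hδ, hAδ⟩ := (nontrivialSeq_iff hAm).1 hAnt
  obtain ⟨c₁, hc₁, h₁⟩ :=
    C.exists_forall_eventually_le_cond hR hq hY hA hδ fun n => (hAδ n).1
  obtain ⟨c₂, hc₂, h₂⟩ :=
    C.exists_forall_eventually_le_cond hR hq hY (hA.compl hR hq) hδ fun n => (hAδ n).2
  obtain ⟨N, hN⟩ := (h₁.and h₂).exists_forall_of_atTop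
  have := cond_isProbabilityMeasure (μ := μ) hY₀
  have hcond : ∀ {s t : Set X}, Y ∩ s = Y ∩ t → μ[s|Y] = μ[t|Y] := fun h => by
    rw [cond_apply hY, cond_apply hY, h]
  refine ⟨fun n => A (n + N) ∩ Y, fun n => ⟨(hAm _).inter hY, inter_subset_right⟩,
    AsympInvariantRel.asympInvariantOn_inter
      (fun f hf => (hA f hf).comp (tendsto_add_atTop_nat N)) Y,
    (nontrivialSeq_iff fun n => (hAm _).inter hY).2
      ⟨min c₁ c₂, lt_min hc₁ hc₂, fun n => ?_⟩⟩
  obtain ⟨hn₁, hn₂⟩ := hN (n + N) (Nat.le_add_left N n)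
  constructor
  · rw [hcond (s := A (n + N) ∩ Y) (t := A (n + N))
      (by rw [inter_comm _ Y, ← inter_assoc, inter_self])]
    exact (min_le_left _ _).trans hn₁
  · rw [hcond (s := (A (n + N) ∩ Y)ᶜ) (t := (A (n + N))ᶜ)
      (by rw [compl_inter, inter_union_distrib_left, inter_compl_self, union_empty])]
    exact (min_le_right _ _).trans hn₂

def extend (C : CompleteSectionCover μ R Y) (B : Set X) : Set X :=
  ⋃ j, C.P j ∩ (C.e j).toFun ⁻¹' B

theorem measurableSet_extend (C : CompleteSectionCover μ R Y) {B : Set X}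
    (hB : MeasurableSet B) : MeasurableSet (C.extend B) :=
  MeasurableSet.iUnion fun j => (C.measurableSet_P j).inter ((C.e j).measurable_toFun hB)

theorem mem_extend_iff (C : CompleteSectionCover μ R Y) {B : Set X} {x : X} {j : ℕ}
    (hx : x ∈ C.P j) : x ∈ C.extend B ↔ (C.e j).toFun x ∈ B := by
  refine ⟨fun h => ?_, fun h => mem_iUnion.2 ⟨j, hx, h⟩⟩
  obtain ⟨i, hxi, hB⟩ := mem_iUnion.1 h
  obtain rfl : i = j := C.pairwise_disjoint.eq (not_disjoint_iff.2 ⟨x, hxi, hx⟩)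
  exact hB

theorem extend_inter_self (C : CompleteSectionCover μ R Y) {B : Set X} (hB : B ⊆ Y) :
    C.extend B ∩ Y = B := by
  have hmem : ∀ x ∈ Y, (x ∈ C.extend B ↔ x ∈ B) := fun x hx => by
    rw [C.mem_extend_iff (by rwa [C.P_zero] : x ∈ C.P 0), C.e_zero]
    rfl
  ext x
  exact ⟨fun hx => (hmem x hx.2).1 hx.1, fun hx => ⟨(hmem x (hB hx)).2 hx, hB hx⟩⟩

theorem tendsto_measure_extend_inter (C : CompleteSectionCover μ R Y) [IsFiniteMeasure μ]
    (hR : Equivalence fun x y => (x, y) ∈ R) (hq : QuasiInvariant μ R) (hY : MeasurableSet Y)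
    {B : ℕ → Set X} (hB : AsympInvariantOn μ R Y B) {f : PartialIso X} (hf : f.IsInnerOf R)
    (i j : ℕ) :
    Tendsto (fun n => μ ((f.toFun '' (C.extend (B n) ∩ f.dom) \ C.extend (B n)) ∩ C.P j ∩
      f.invFun ⁻¹' C.P i)) atTop (nhds 0) := by
  -- `ψ` is `e j ∘ f ∘ (e i)⁻¹`, cut down to a partial isomorphism of `Y`
  set ψ := ((ofSet Y hY).trans ((C.e i).symm.trans f)).trans ((C.e j).trans (ofSet Y hY))
  have hψ : ψ.IsInnerOf R :=
    ((isInnerOf_ofSet hR hY).trans hR (((C.isInnerOf i).symm hR).trans hR hf)).trans hR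
      ((C.isInnerOf j).trans hR (isInnerOf_ofSet hR hY))
  have hψran : ψ.ran ⊆ Y ∩ (C.e j).ran := fun _ hy => hy.1
  have hsub : ∀ n, (f.toFun '' (C.extend (B n) ∩ f.dom) \ C.extend (B n)) ∩ C.P j ∩
      f.invFun ⁻¹' C.P i ⊆ (C.e j).symm.toFun '' (ψ.toFun '' (B n ∩ ψ.dom) \ B n) := by
    rintro n _ ⟨⟨⟨⟨x, ⟨hxA, hx⟩, rfl⟩, hyA⟩, hyP⟩, hxP⟩
    rw [mem_preimage, f.left_inv x hx] at hxP
    have hinv : (C.e i).invFun ((C.e i).toFun x) = x :=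
      (C.e i).left_inv x (C.P_subset_dom i hxP)
    have hz : (C.e i).toFun x ∈ ψ.dom := by
      simp only [ψ, mem_trans_dom, ofSet_dom, ofSet_toFun, symm_dom, symm_toFun, trans_toFun,
        Function.comp_apply, id, hinv]
      exact ⟨⟨C.mapsTo i hxP, (C.e i).mapsTo (C.P_subset_dom i hxP), hx⟩,
        C.P_subset_dom j hyP, C.mapsTo j hyP⟩
    have hψz : ψ.toFun ((C.e i).toFun x) = (C.e j).toFun (f.toFun x) := by
      simp [ψ, hinv]
    refine ⟨(C.e j).toFun (f.toFun x), ⟨⟨(C.e i).toFun x, ⟨?_, hz⟩, hψz⟩, ?_⟩,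
      (C.e j).left_inv _ (C.P_subset_dom j hyP)⟩
    · exact (C.mem_extend_iff hxP).1 hxA
    · exact fun h => hyA ((C.mem_extend_iff hyP).2 h)
  refine tendsto_nhds_bot_mono' ?_ fun n => measure_mono (hsub n)
  exact (C.e j).symm.tendsto_measure_image (hq _ ((C.isInnerOf j).symm hR))
    (fun n => sdiff_subset.trans ((ψ.image_subset_ran inter_subset_right).trans
      (hψran.trans inter_subset_right)))
    (hB ψ (fun _ hz => hz.1.1) (hψran.trans inter_subset_left) hψ)

theorem asympInvariantRel_extend (C : CompleteSectionCover μ R Y) [IsFiniteMeasure μ]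
    (hR : Equivalence fun x y => (x, y) ∈ R) (hq : QuasiInvariant μ R) (hY : MeasurableSet Y)
    {B : ℕ → Set X} (hB : AsympInvariantOn μ R Y B) :
    AsympInvariantRel μ R fun n => C.extend (B n) := by
  intro f hf
  have hnull : μ (f.toFun '' ((⋃ i, C.P i)ᶜ ∩ f.dom)) = 0 :=
    hq f hf _ inter_subset_right
      ((MeasurableSet.iUnion C.measurableSet_P).compl.inter f.measurableSet_dom)
      (measure_mono_null inter_subset_left C.measure_compl_iUnion)
  refine tendsto_measure_of_forall_tendsto_measure_inter C.measurableSet_P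
    (fun n => measure_mono_null (sdiff_subset_compl _ _) C.measure_compl_iUnion) fun j => ?_
  refine tendsto_measure_of_forall_tendsto_measure_inter
    (fun i => f.measurable_invFun (C.measurableSet_P i)) (fun n => measure_mono_null ?_ hnull)
    fun i => C.tendsto_measure_extend_inter hR hq hY hB hf i j
  rintro _ ⟨⟨⟨⟨x, ⟨-, hx⟩, rfl⟩, -⟩, -⟩, hnot⟩
  refine ⟨x, ⟨fun hxP => hnot ?_, hx⟩, rfl⟩
  rwa [← preimage_iUnion, mem_preimage, f.left_inv x hx]

theorem exists_asympInvariantRel (C : CompleteSectionCover μ R Y) [IsProbabilityMeasure μ]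
    (hR : Equivalence fun x y => (x, y) ∈ R) (hq : QuasiInvariant μ R) (hY : MeasurableSet Y)
    (hY₀ : μ Y ≠ 0) {B : ℕ → Set X} (hBm : ∀ n, MeasurableSet (B n) ∧ B n ⊆ Y)
    (hB : AsympInvariantOn μ R Y B) (hBnt : NontrivialSeq μ[|Y] B) :
    ∃ A : ℕ → Set X, (∀ n, MeasurableSet (A n)) ∧ AsympInvariantRel μ R A ∧
      NontrivialSeq μ A := by
  have := cond_isProbabilityMeasure (μ := μ) hY₀
  obtain ⟨δ, hδ, hBδ⟩ := (nontrivialSeq_iff fun n => (hBm n).1).1 hBnt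
  have hAm : ∀ n, MeasurableSet (C.extend (B n)) := fun n => C.measurableSet_extend (hBm n).1
  have hAY : ∀ n, C.extend (B n) ∩ Y = B n := fun n => C.extend_inter_self (hBm n).2
  refine ⟨fun n => C.extend (B n), hAm, C.asympInvariantRel_extend hR hq hY hB,
    (nontrivialSeq_iff hAm).2 ⟨δ * μ Y, ENNReal.mul_pos hδ.ne' hY₀, fun n => ⟨?_, ?_⟩⟩⟩
  · calc δ * μ Y ≤ μ[B n|Y] * μ Y := mul_le_mul_left (hBδ n).1 _
      _ = μ (Y ∩ B n) := cond_mul_eq_inter hY _ _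
      _ ≤ μ (C.extend (B n)) :=
        measure_mono fun x hx => ((hAY n).superset hx.2).1
  · calc δ * μ Y ≤ μ[(B n)ᶜ|Y] * μ Y := mul_le_mul_left (hBδ n).2 _
      _ = μ (Y ∩ (B n)ᶜ) := cond_mul_eq_inter hY _ _
      _ ≤ μ (C.extend (B n))ᶜ :=
        measure_mono fun x hx hxA => hx.2 ((hAY n).subset ⟨hxA, hx.1⟩)

end CompleteSectionCover

theorem stmt11_general {X : Type*} [MeasurableSpace X]
    (μ : Measure X) [IsProbabilityMeasure μ]
    (Φ : Set (PartialIso X)) (hcnt : Φ.Countable)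
    (hns : ∀ φ ∈ Φ, φ.Nonsingular μ)
    (herg : ErgodicRel μ (RGen Φ))
    (Y : Set X) (hY : MeasurableSet Y) (hYpos : 0 < μ Y) :
    (∃ A : ℕ → Set X, (∀ n, MeasurableSet (A n)) ∧
        AsympInvariantRel μ (RGen Φ) A ∧ NontrivialSeq μ A) ↔
      (∃ B : ℕ → Set X, (∀ n, MeasurableSet (B n) ∧ B n ⊆ Y) ∧
        (∀ ψ : PartialIso X, ψ.dom ⊆ Y → ψ.ran ⊆ Y → ψ.IsInnerOf (RGen Φ) →
          Tendsto (fun n => μ (ψ.toFun '' (B n ∩ ψ.dom) \ B n) / μ Y) atTop (nhds 0)) ∧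
        (∃ δ : ℝ≥0∞, 0 < δ ∧ ∀ n, δ ≤ μ (B n) / μ Y ∧ μ (B n) / μ Y ≤ 1 - δ)) := by
  have hR := equivalence_rGen Φ
  have hq := quasiInvariant_rGen hcnt hns
  obtain ⟨M, hM0, hMR, hRM⟩ := exists_seq_covering_rGen hcnt
  obtain ⟨C⟩ := exists_completeSectionCover hR herg hY hYpos M hM0 hMR hRM
  have hinv : ∀ B, AsympInvariantOn μ (RGen Φ) Y B ↔ ∀ ψ : PartialIso X, ψ.dom ⊆ Y →
      ψ.ran ⊆ Y → ψ.IsInnerOf (RGen Φ) →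
      Tendsto (fun n => μ (ψ.toFun '' (B n ∩ ψ.dom) \ B n) / μ Y) atTop (nhds 0) := fun B => by
    simp only [AsympInvariantOn,
      ENNReal.tendsto_div_const_nhds_zero_iff hYpos.ne' (measure_ne_top μ Y)]
  have hnt : ∀ B : ℕ → Set X, (∀ n, B n ⊆ Y) → (NontrivialSeq μ[|Y] B ↔
      ∃ δ : ℝ≥0∞, 0 < δ ∧ ∀ n, δ ≤ μ (B n) / μ Y ∧ μ (B n) / μ Y ≤ 1 - δ) := fun B hB => by
    simp only [NontrivialSeq, cond_apply hY, inter_eq_right.2 (hB _), ENNReal.div_eq_inv_mul]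
  constructor
  · rintro ⟨A, hAm, hA, hAnt⟩
    obtain ⟨B, hBm, hB, hBnt⟩ := C.exists_asympInvariantOn hR hq hY hYpos.ne' hAm hA hAnt
    exact ⟨B, hBm, (hinv B).1 hB, (hnt B fun n => (hBm n).2).1 hBnt⟩
  · rintro ⟨B, hBm, hB, hBnt⟩
    exact C.exists_asympInvariantRel hR hq hY hYpos.ne' hBm ((hinv B).2 hB)
      ((hnt B fun n => (hBm n).2).2 hBnt)

/-- For a countable family `Φ` generating an ergodic relation `R = RGen Φ`
and a Borel set `Y` of positive measure, there is a nontrivial asymptotically invariant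
sequence for `R` on `(X, μ)` iff there is one for the restriction of `R` to `Y` with the
normalized measure. -/
theorem stmt11 {X : Type*} [MeasurableSpace X] [StandardBorelSpace X]
    (μ : Measure X) [IsProbabilityMeasure μ] [NullSingletonClass μ]
    (Φ : Set (PartialIso X)) (hcnt : Φ.Countable)
    (hns : ∀ φ ∈ Φ, φ.Nonsingular μ)
    (herg : ErgodicRel μ (RGen Φ))
    (Y : Set X) (hY : MeasurableSet Y) (hYpos : 0 < μ Y) :
    (∃ A : ℕ → Set X, (∀ n, MeasurableSet (A n)) ∧
        AsympInvariantRel μ (RGen Φ) A ∧ NontrivialSeq μ A) ↔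
      (∃ B : ℕ → Set X, (∀ n, MeasurableSet (B n) ∧ B n ⊆ Y) ∧
        (∀ ψ : PartialIso X, ψ.dom ⊆ Y → ψ.ran ⊆ Y → ψ.IsInnerOf (RGen Φ) →
          Tendsto (fun n => μ (ψ.toFun '' (B n ∩ ψ.dom) \ B n) / μ Y) atTop (nhds 0)) ∧
        (∃ δ : ℝ≥0∞, 0 < δ ∧ ∀ n, δ ≤ μ (B n) / μ Y ∧ μ (B n) / μ Y ≤ 1 - δ)) :=
  stmt11_general μ Φ hcnt hns herg Y hY hYpos
end

section
/- Let (X, μ) be a standard Borel space with an atomless Borel probability measure μ and let T : X → X be a μ-preserving Borel automorphism that is aperiodic (for μ-almost every x, T^k(x) ≠ x for all integers k ≠ 0). Then for every n ∈ ℕ and every ε > 0 there exist Borel sets A, B ⊆ X with μ(A) ≥ 1/4 − ε, μ(B) ≥ 1/4 − ε, and μ(T^k(A) ∩ B) = 0 for every integer k with |k| ≤ n. In particular, the metric-measure space (X, d_T, μ) is not concentrated, where d_T(x, y) = min{|k| : T^k(x) = y} (and ∞ if x and y lie on different T-orbits). -/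
open MeasureTheory Filter Set
open scoped ENNReal

variable {X : Type*} [MeasurableSpace X]

/-- The metric-measure space `(X, d_T, μ)` attached to the orbits of `T` is concentrated. -/
def ConcentratedOrbit {X : Type*} [MeasurableSpace X] (T : Equiv.Perm X) (μ : Measure X) :
    Prop :=
  ∀ δ : ℝ≥0∞, 0 < δ → ∃ r : ℕ, ∀ A B : Set X, MeasurableSet A → MeasurableSet B →
    δ ≤ μ A → δ ≤ μ B →
    0 < μ {x ∈ A | ∃ k : ℤ, |k| ≤ (r : ℤ) ∧ (T ^ k) x ∈ B}

/-!
A set `C` of small measure meeting every orbit is obtained from a bounded injective Borel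
function `g`: take the points where `g` comes within `η` of its infimum over the orbit. As
`η → 0` these sets decrease to the set of orbit minima, which is null: as `g` is injective and
`T` aperiodic, its translates are pairwise disjoint sets of equal measure.

Sort the points by the time `j` elapsed since their latest visit to `C` (the Kakutani tower over
`C`). Level `j + 1` lies in the image of level `j`, so levels have measure at most `μ C` and a
window of heights is at least as heavy as any of its upward translates. Hence, with period
`4 w`, the heights `≡ 0, …, w - 1` carry at least a quarter of the mass above the lowest
`4 w` levels, and so do the heights `≡ 2 w, …, 3 w - 1`. A shift by fewer than `w` steps changes
the height by exactly the shift, so it never carries one of these two sets into the other.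
-/

namespace Equiv.Perm

theorem zpow_apply_zpow_apply {α : Type*} (σ : Perm α) (k l : ℤ) (x : α) :
    (σ ^ k) ((σ ^ l) x) = (σ ^ (k + l)) x := by
  rw [zpow_add, mul_apply]

theorem image_zpow_eq_preimage {α : Type*} (σ : Perm α) (k : ℤ) (A : Set α) :
    (σ ^ k) '' A = (σ ^ (-k)) ⁻¹' A := by
  rw [Equiv.image_eq_preimage_symm, zpow_neg, inv_def]

variable {μ : Measure X} {T : Perm X}

theorem measurePreserving_of_measure_image_eq (hT : Measurable T)
    (hpres : ∀ A : Set X, MeasurableSet A → μ (T '' A) = μ A) : MeasurePreserving T μ μ :=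
  ⟨hT, Measure.ext fun A hA => by
    rw [Measure.map_apply hT hA, ← hpres _ (hT hA), image_preimage_eq _ T.surjective]⟩

theorem measurePreserving_zpow (hT : MeasurePreserving T μ μ) (hT' : Measurable T.symm)
    (k : ℤ) : MeasurePreserving ⇑(T ^ k) μ μ := by
  have hinv : MeasurePreserving ⇑T⁻¹ μ μ :=
    MeasurePreserving.symm ⟨T, hT.measurable, hT'⟩ hT
  induction k using Int.induction_on with
  | zero => exact MeasurePreserving.id μ
  | succ k ih => rw [zpow_add_one, coe_mul]; exact ih.comp hT
  | pred k ih => rw [zpow_sub_one, coe_mul]; exact ih.comp hinv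

theorem measure_zpow_image (hT : ∀ k : ℤ, MeasurePreserving ⇑(T ^ k) μ μ) (k : ℤ)
    {A : Set X} (hA : MeasurableSet A) : μ ((T ^ k) '' A) = μ A := by
  rw [image_zpow_eq_preimage]
  exact (hT (-k)).measure_preimage hA.nullMeasurableSet

end Equiv.Perm

theorem MeasureTheory.measure_eq_zero_of_pairwise_aedisjoint {μ : Measure X}
    [IsFiniteMeasure μ] {s : ℕ → Set X} (hd : Pairwise (Function.onFun (AEDisjoint μ) s))
    (hs : ∀ i, NullMeasurableSet (s i) μ) (heq : ∀ i, μ (s i) = μ (s 0)) : μ (s 0) = 0 := by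
  by_contra h
  have hU := measure_iUnion₀ hd hs
  rw [tsum_congr heq, ENNReal.tsum_const_eq_top_of_ne_zero h] at hU
  exact measure_ne_top μ _ hU

theorem ENNReal.one_div_four_sub_le_of_one_le {a ε : ℝ≥0∞} (h : 1 ≤ 4 * a + ε) :
    1 / 4 - ε ≤ a := by
  rw [tsub_le_iff_right, ENNReal.div_le_iff_le_mul (Or.inl four_ne_zero) (Or.inl (by simp))]
  calc 1 ≤ 4 * a + ε := h
    _ ≤ 4 * a + 4 * ε := by gcongr; exact le_mul_of_one_le_left bot_le (by norm_num)
    _ = (a + ε) * 4 := by ring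

namespace OrbitSeparation

open Equiv.Perm

variable {μ : Measure X} {T : Equiv.Perm X}

noncomputable def orbitInf {α : Type*} (σ : Equiv.Perm α) (g : α → ℝ) (x : α) : ℝ :=
  ⨅ k : ℤ, g ((σ ^ k) x)

theorem orbitInf_zpow_apply {α : Type*} (σ : Equiv.Perm α) (g : α → ℝ) (k : ℤ) (x : α) :
    orbitInf σ g ((σ ^ k) x) = orbitInf σ g x := by
  simp only [orbitInf, zpow_apply_zpow_apply]
  exact (Equiv.addRight k).iInf_comp (g := fun i => g ((σ ^ i) x))

theorem orbitInf_le {α : Type*} {σ : Equiv.Perm α} {g : α → ℝ} (hg : BddBelow (range g))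
    (k : ℤ) (x : α) : orbitInf σ g x ≤ g ((σ ^ k) x) :=
  ciInf_le (hg.mono (range_comp_subset_range _ g)) k

theorem measurable_orbitInf (hT : ∀ k : ℤ, MeasurePreserving ⇑(T ^ k) μ μ) {g : X → ℝ}
    (hg : Measurable g) : Measurable (orbitInf T g) :=
  Measurable.iInf fun k => hg.comp (hT k).measurable

theorem measure_setOf_le_orbitInf_eq_zero [IsFiniteMeasure μ]
    (hT : ∀ k : ℤ, MeasurePreserving ⇑(T ^ k) μ μ)
    (haper : ∀ᵐ x ∂μ, ∀ k : ℤ, k ≠ 0 → (T ^ k) x ≠ x) {g : X → ℝ} (hg : Measurable g)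
    (hinj : Function.Injective g) (hbdd : BddBelow (range g)) :
    μ {x | g x ≤ orbitInf T g x} = 0 := by
  set Z := {x | g x ≤ orbitInf T g x}
  have hZ : MeasurableSet Z := measurableSet_le hg (measurable_orbitInf hT hg)
  have hmin : ∀ {k x}, (T ^ k) x ∈ Z → ∀ l, g ((T ^ k) x) ≤ g ((T ^ l) x) := fun {k x} h l =>
    h.out.trans ((orbitInf_zpow_apply T g k x).trans_le (orbitInf_le hbdd l x))
  have hd : Pairwise (Function.onFun (AEDisjoint μ) fun i : ℕ => (T ^ (i : ℤ)) ⁻¹' Z) := by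
    intro i j hij
    refine measure_mono_null (fun x ⟨hi, hj⟩ => ?_) (ae_iff.1 haper)
    intro hx
    have heq : (T ^ (i : ℤ)) x = (T ^ (j : ℤ)) x := hinj ((hmin hi j).antisymm (hmin hj i))
    refine hx ((i : ℤ) - j) (sub_ne_zero.2 (Nat.cast_injective.ne hij)) ?_
    rw [sub_eq_neg_add, ← zpow_apply_zpow_apply, heq, zpow_apply_zpow_apply, neg_add_cancel,
      zpow_zero, one_apply]
  simpa using measure_eq_zero_of_pairwise_aedisjoint hd
    (fun i => (hZ.preimage (hT i).measurable).nullMeasurableSet)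
    (fun i => by simp only [(hT _).measure_preimage hZ.nullMeasurableSet])

theorem exists_zpow_apply_lt_orbitInf_add {α : Type*} (σ : Equiv.Perm α) {g : α → ℝ}
    {η : ℝ} (hη : 0 < η) (x : α) : ∃ k : ℤ, g ((σ ^ k) x) < orbitInf σ g ((σ ^ k) x) + η := by
  obtain ⟨k, hk⟩ := exists_lt_of_ciInf_lt (lt_add_of_pos_right (orbitInf σ g x) hη)
  exact ⟨k, by rwa [orbitInf_zpow_apply]⟩

theorem exists_measure_le_forall_exists_zpow_mem [StandardBorelSpace X] [IsFiniteMeasure μ]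
    (hT : ∀ k : ℤ, MeasurePreserving ⇑(T ^ k) μ μ)
    (haper : ∀ᵐ x ∂μ, ∀ k : ℤ, k ≠ 0 → (T ^ k) x ≠ x) {δ : ℝ≥0∞} (hδ : 0 < δ) :
    ∃ C : Set X, MeasurableSet C ∧ μ C ≤ δ ∧ ∀ x, ∃ k : ℤ, (T ^ k) x ∈ C := by
  obtain ⟨f, hf⟩ := exists_measurableEmbedding_real X
  set g := Real.arctan ∘ f
  have hg : Measurable g := Real.continuous_arctan.measurable.comp hf.measurable
  have hbdd : BddBelow (range g) :=
    ⟨-(Real.pi / 2), by rintro _ ⟨x, rfl⟩; exact (Real.neg_pi_div_two_lt_arctan _).le⟩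
  set C : ℕ → Set X := fun N => {x | g x < orbitInf T g x + 1 / (N + 1)}
  have hC : ∀ N, MeasurableSet (C N) := fun N =>
    measurableSet_lt hg ((measurable_orbitInf hT hg).add_const _)
  have hanti : Antitone C := fun N M hNM x (hx : g x < _) =>
    show g x < _ from hx.trans_le (by gcongr)
  have hInter : ⋂ N, C N ⊆ {x | g x ≤ orbitInf T g x} := fun x hx =>
    show g x ≤ _ from le_of_forall_pos_lt_add fun (ε : ℝ) hε => by
      obtain ⟨N, hN⟩ := exists_nat_one_div_lt hε
      exact (mem_iInter.1 hx N).out.trans (by gcongr)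
  have hnull := measure_mono_null hInter <| measure_setOf_le_orbitInf_eq_zero hT haper hg
    (Real.arctan_injective.comp hf.injective) hbdd
  have htend := tendsto_measure_iInter_atTop (μ := μ) (fun N => (hC N).nullMeasurableSet) hanti
    ⟨0, measure_ne_top _ _⟩
  rw [hnull] at htend
  obtain ⟨N, hN⟩ := (htend.eventually (gt_mem_nhds hδ)).exists
  exact ⟨C N, hC N, hN.le, exists_zpow_apply_lt_orbitInf_add T Nat.one_div_pos_of_nat⟩

/-- By invariance, the set of points that visited `C` in the past agrees a.e. with its preimage
under each forward iterate, and these preimages together contain every point of a visiting orbit. -/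
theorem ae_exists_zpow_neg_mem [IsFiniteMeasure μ]
    (hT : ∀ k : ℤ, MeasurePreserving ⇑(T ^ k) μ μ) {C : Set X} (hC : MeasurableSet C)
    (hvisit : ∀ᵐ x ∂μ, ∃ k : ℤ, (T ^ k) x ∈ C) :
    ∀ᵐ x ∂μ, ∃ j : ℕ, (T ^ (-(j : ℤ))) x ∈ C := by
  set E := ⋃ j : ℕ, (T ^ (-(j : ℤ))) ⁻¹' C
  have hE : MeasurableSet E := MeasurableSet.iUnion fun j => hC.preimage (hT _).measurable
  have hsub : ∀ k : ℕ, E ⊆ (T ^ (k : ℤ)) ⁻¹' E := fun k x hx => by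
    obtain ⟨j, hj⟩ := mem_iUnion.1 hx
    refine mem_iUnion.2 ⟨j + k, ?_⟩
    simp only [mem_preimage, zpow_apply_zpow_apply] at hj ⊢
    convert hj using 3
    push_cast
    ring
  have hae : ∀ k : ℕ, E =ᵐ[μ] (T ^ (k : ℤ)) ⁻¹' E := fun k =>
    ae_eq_of_subset_of_measure_ge (hsub k) ((hT k).measure_preimage hE.nullMeasurableSet).le
      hE.nullMeasurableSet (measure_ne_top _ _)
  filter_upwards [hvisit, ae_all_iff.2 hae] with x ⟨k, hk⟩ hx
  have hxk : x ∈ (T ^ (k.toNat : ℤ)) ⁻¹' E := by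
    refine mem_iUnion.2 ⟨(-k).toNat, ?_⟩
    simp only [mem_preimage, zpow_apply_zpow_apply]
    convert hk using 3
    omega
  exact mem_iUnion.1 (cast (hx k.toNat).symm hxk)

/-- Level `j` of the Kakutani tower over `C`. -/
def towerLevel {α : Type*} (σ : Equiv.Perm α) (C : Set α) (j : ℕ) : Set α :=
  {x | (σ ^ (-(j : ℤ))) x ∈ C ∧ ∀ i < j, (σ ^ (-(i : ℤ))) x ∉ C}

section Tower

variable {α : Type*} {σ : Equiv.Perm α} {C : Set α}

theorem towerLevel_zero : towerLevel σ C 0 = C := by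
  ext x
  simp [towerLevel]

theorem exists_mem_towerLevel {x : α} (h : ∃ j : ℕ, (σ ^ (-(j : ℤ))) x ∈ C) :
    ∃ j, x ∈ towerLevel σ C j := by
  classical
  exact ⟨Nat.find h, Nat.find_spec h, fun i hi => Nat.find_min h hi⟩

theorem towerLevel_add_subset (j m : ℕ) :
    towerLevel σ C (j + m) ⊆ (σ ^ (m : ℤ)) '' towerLevel σ C j := by
  intro x ⟨hx, hmin⟩
  refine ⟨(σ ^ (-(m : ℤ))) x, ⟨?_, fun i hi => ?_⟩, ?_⟩
  · rwa [zpow_apply_zpow_apply, ← neg_add, ← Nat.cast_add]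
  · rw [zpow_apply_zpow_apply, ← neg_add, ← Nat.cast_add]
    exact hmin (i + m) (by omega)
  · rw [zpow_apply_zpow_apply, add_neg_cancel, zpow_zero, one_apply]

theorem eq_add_of_mem_towerLevel {x : α} {j j' m : ℕ} (hx : x ∈ towerLevel σ C j)
    (hy : (σ ^ (m : ℤ)) x ∈ towerLevel σ C j') (hm : m ≤ j') : j' = j + m := by
  have hle : j ≤ j' - m := by
    by_contra! hlt
    refine hx.2 (j' - m) hlt ?_
    have := hy.1
    rwa [zpow_apply_zpow_apply, show -(j' : ℤ) + m = -((j' - m : ℕ) : ℤ) by omega] at this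
  have hge : j' ≤ j + m := by
    by_contra! hlt
    refine hy.2 (j + m) hlt ?_
    rw [zpow_apply_zpow_apply, show -((j + m : ℕ) : ℤ) + m = -(j : ℤ) by omega]
    exact hx.1
  omega

end Tower

variable {C : Set X}

theorem measurableSet_towerLevel (hT : ∀ k : ℤ, MeasurePreserving ⇑(T ^ k) μ μ)
    (hC : MeasurableSet C) (j : ℕ) : MeasurableSet (towerLevel T C j) := by
  have : towerLevel T C j =
      (T ^ (-(j : ℤ))) ⁻¹' C ∩ ⋂ (i : ℕ) (_ : i < j), (T ^ (-(i : ℤ))) ⁻¹' Cᶜ := by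
    ext x
    simp [towerLevel]
  rw [this]
  exact (hC.preimage (hT _).measurable).inter <| .iInter fun i => .iInter fun _ =>
    hC.compl.preimage (hT _).measurable

theorem measure_towerLevel_le (hT : ∀ k : ℤ, MeasurePreserving ⇑(T ^ k) μ μ)
    (hC : MeasurableSet C) (j : ℕ) : μ (towerLevel T C j) ≤ μ C := by
  calc μ (towerLevel T C j)
      ≤ μ ((T ^ (j : ℤ)) '' towerLevel T C 0) := by
        simpa using measure_mono (μ := μ) (towerLevel_add_subset (σ := T) (C := C) 0 j)
    _ = μ C := by rw [measure_zpow_image hT _ (measurableSet_towerLevel hT hC 0), towerLevel_zero]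

/-- The levels of the tower over `C` at heights `o, …, o + w - 1` modulo `4 w`, above the
lowest block of `4 w` levels. -/
def towerWindow {α : Type*} (σ : Equiv.Perm α) (C : Set α) (w o : ℕ) : Set α :=
  ⋃ (q : ℕ) (s : ℕ) (_ : s < w), towerLevel σ C ((q + 1) * (4 * w) + o + s)

section Window

variable {α : Type*} {σ : Equiv.Perm α} {C : Set α}

theorem towerWindow_add_subset (w o m : ℕ) :
    towerWindow σ C w (o + m) ⊆ (σ ^ (m : ℤ)) '' towerWindow σ C w o := by
  intro x hx
  simp only [towerWindow, mem_iUnion] at hx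
  obtain ⟨q, s, hs, hx⟩ := hx
  rw [show (q + 1) * (4 * w) + (o + m) + s = (q + 1) * (4 * w) + o + s + m by ring] at hx
  obtain ⟨y, hy, rfl⟩ := towerLevel_add_subset _ m hx
  exact ⟨y, mem_iUnion.2 ⟨q, mem_iUnion₂.2 ⟨s, hs, hy⟩⟩, rfl⟩

theorem iUnion_towerLevel_subset {w : ℕ} (hw : 0 < w) (o : ℕ) :
    ⋃ j, towerLevel σ C j ⊆
      (⋃ j ∈ Finset.range (4 * w + o), towerLevel σ C j) ∪
        ⋃ r ∈ Finset.range 4, towerWindow σ C w (o + r * w) := by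
  intro x hx
  obtain ⟨j, hj⟩ := mem_iUnion.1 hx
  simp only [mem_union, mem_iUnion, Finset.mem_range, towerWindow]
  by_cases hjo : j < 4 * w + o
  · exact Or.inl ⟨j, hjo, hj⟩
  refine Or.inr ⟨(j - o) % (4 * w) / w, ?_, (j - o) / (4 * w) - 1, (j - o) % (4 * w) % w,
    Nat.mod_lt _ hw, ?_⟩
  · exact Nat.div_lt_of_lt_mul ((Nat.mod_lt _ (by omega)).trans_eq (mul_comm _ _))
  · have h1 := Nat.div_add_mod (j - o) (4 * w)
    have h2 := Nat.div_add_mod ((j - o) % (4 * w)) w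
    have h3 : 1 ≤ (j - o) / (4 * w) := (Nat.le_div_iff_mul_le (by omega)).2 (by omega)
    have h4 : j - o + o = j := by omega
    rw [Nat.sub_add_cancel h3]
    generalize (j - o) % (4 * w) = R at *
    generalize (j - o) / (4 * w) = Q at *
    generalize j - o = d at *
    subst h4
    convert hj using 2
    linarith

theorem towerWindow_heights_ne {w q q' s s' m : ℕ} (hs : s < w) (hs' : s' < w) (hm : m < w) :
    (q + 1) * (4 * w) + 0 + s + m ≠ (q' + 1) * (4 * w) + 2 * w + s' ∧
      (q' + 1) * (4 * w) + 2 * w + s' + m ≠ (q + 1) * (4 * w) + 0 + s := by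
  rcases lt_trichotomy q q' with h | rfl | h
  · have := Nat.mul_le_mul_right (4 * w) (show q + 1 + 1 ≤ q' + 1 by omega)
    rw [Nat.succ_mul] at this
    omega
  · omega
  · have := Nat.mul_le_mul_right (4 * w) (show q' + 1 + 1 ≤ q + 1 by omega)
    rw [Nat.succ_mul] at this
    omega

theorem zpow_image_towerWindow_inter_eq_empty {w : ℕ} {k : ℤ} (hk : |k| < w) :
    (σ ^ k) '' towerWindow σ C w 0 ∩ towerWindow σ C w (2 * w) = ∅ := by
  refine eq_empty_iff_forall_notMem.2 ?_
  rintro _ ⟨⟨x, hx, rfl⟩, hy⟩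
  simp only [towerWindow, mem_iUnion] at hx hy
  obtain ⟨q, s, hs, hx⟩ := hx
  obtain ⟨q', s', hs', hy⟩ := hy
  have hq := Nat.le_mul_of_pos_left (4 * w) (Nat.add_one_pos q)
  have hq' := Nat.le_mul_of_pos_left (4 * w) (Nat.add_one_pos q')
  obtain ⟨hk1, hk2⟩ := abs_lt.1 hk
  rcases le_or_gt 0 k with hk0 | hk0
  · lift k to ℕ using hk0
    have := eq_add_of_mem_towerLevel hx hy (by omega)
    exact (towerWindow_heights_ne hs hs' (by omega)).1 this.symm
  · obtain ⟨m, rfl⟩ : ∃ m : ℕ, k = -m := ⟨(-k).toNat, by omega⟩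
    have hback : (σ ^ (m : ℤ)) ((σ ^ (-(m : ℤ))) x) = x := by
      rw [zpow_apply_zpow_apply, add_neg_cancel, zpow_zero, one_apply]
    have := eq_add_of_mem_towerLevel hy (hback.symm ▸ hx) (by omega)
    exact (towerWindow_heights_ne hs hs' (by omega)).2 this.symm

end Window

theorem measurableSet_towerWindow (hT : ∀ k : ℤ, MeasurePreserving ⇑(T ^ k) μ μ)
    (hC : MeasurableSet C) (w o : ℕ) : MeasurableSet (towerWindow T C w o) :=
  .iUnion fun _ => .iUnion fun _ => .iUnion fun _ => measurableSet_towerLevel hT hC _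

theorem measure_towerWindow_add_le (hT : ∀ k : ℤ, MeasurePreserving ⇑(T ^ k) μ μ)
    (hC : MeasurableSet C) (w o m : ℕ) :
    μ (towerWindow T C w (o + m)) ≤ μ (towerWindow T C w o) :=
  (measure_mono (towerWindow_add_subset w o m)).trans_eq
    (measure_zpow_image hT _ (measurableSet_towerWindow hT hC w o))

theorem measure_univ_le_towerWindow (hT : ∀ k : ℤ, MeasurePreserving ⇑(T ^ k) μ μ)
    (hC : MeasurableSet C) (hsweep : ∀ᵐ x ∂μ, ∃ j : ℕ, (T ^ (-(j : ℤ))) x ∈ C) {w : ℕ}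
    (hw : 0 < w) (o : ℕ) :
    μ univ ≤ 4 * μ (towerWindow T C w o) + (4 * w + o : ℕ) * μ C := by
  have hcov : (univ : Set X) ≤ᵐ[μ] ⋃ j, towerLevel T C j := by
    filter_upwards [hsweep] with x hx _ using mem_iUnion.2 (exists_mem_towerLevel hx)
  calc μ univ ≤ μ (⋃ j, towerLevel T C j) := measure_mono_ae hcov
    _ ≤ μ (⋃ j ∈ Finset.range (4 * w + o), towerLevel T C j) +
          μ (⋃ r ∈ Finset.range 4, towerWindow T C w (o + r * w)) :=
        (measure_mono (iUnion_towerLevel_subset hw o)).trans (measure_union_le _ _)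
    _ ≤ (Finset.range (4 * w + o)).card • μ C +
          (Finset.range 4).card • μ (towerWindow T C w o) :=
        add_le_add
          ((measure_biUnion_finset_le _ _).trans <| Finset.sum_le_card_nsmul _ _ _ fun j _ =>
            measure_towerLevel_le hT hC j)
          ((measure_biUnion_finset_le _ _).trans <| Finset.sum_le_card_nsmul _ _ _ fun r _ =>
            measure_towerWindow_add_le hT hC w o _)
    _ = 4 * μ (towerWindow T C w o) + (4 * w + o : ℕ) * μ C := by
        rw [add_comm, Finset.card_range, Finset.card_range, nsmul_eq_mul, nsmul_eq_mul]
        norm_num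

theorem exists_separated_of_aperiodic [StandardBorelSpace X] [IsProbabilityMeasure μ]
    (hT : ∀ k : ℤ, MeasurePreserving ⇑(T ^ k) μ μ)
    (haper : ∀ᵐ x ∂μ, ∀ k : ℤ, k ≠ 0 → (T ^ k) x ≠ x) (n : ℕ) {ε : ℝ≥0∞} (hε : 0 < ε) :
    ∃ A B : Set X, MeasurableSet A ∧ MeasurableSet B ∧ 1 / 4 - ε ≤ μ A ∧ 1 / 4 - ε ≤ μ B ∧
      ∀ k : ℤ, |k| ≤ (n : ℤ) → μ ((T ^ k) '' A ∩ B) = 0 := by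
  set w := n + 1
  have hw : ((6 * w : ℕ) : ℝ≥0∞) ≠ 0 := Nat.cast_ne_zero.2 (by omega)
  obtain ⟨C, hC, hμC, hvisit⟩ := exists_measure_le_forall_exists_zpow_mem hT haper
    (ENNReal.div_pos hε.ne' (ENNReal.natCast_ne_top (6 * w)))
  have hsweep := ae_exists_zpow_neg_mem hT hC (ae_of_all _ hvisit)
  have hbound : ∀ o ≤ 2 * w, 1 / 4 - ε ≤ μ (towerWindow T C w o) := fun o ho => by
    refine ENNReal.one_div_four_sub_le_of_one_le ?_
    calc 1 = μ univ := measure_univ.symm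
      _ ≤ 4 * μ (towerWindow T C w o) + (4 * w + o : ℕ) * μ C :=
        measure_univ_le_towerWindow hT hC hsweep n.succ_pos o
      _ ≤ 4 * μ (towerWindow T C w o) + (6 * w : ℕ) * (ε / (6 * w : ℕ)) := by
        gcongr
        omega
      _ = 4 * μ (towerWindow T C w o) + ε := by
        rw [ENNReal.mul_div_cancel hw (ENNReal.natCast_ne_top _)]
  refine ⟨_, _, measurableSet_towerWindow hT hC w 0, measurableSet_towerWindow hT hC w (2 * w),
    hbound 0 (Nat.zero_le _), hbound _ le_rfl, fun k hk => ?_⟩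
  rw [zpow_image_towerWindow_inter_eq_empty (by omega), measure_empty]

theorem not_concentratedOrbit (hT : ∀ k : ℤ, MeasurePreserving ⇑(T ^ k) μ μ) {δ : ℝ≥0∞}
    (hδ : 0 < δ)
    (h : ∀ n : ℕ, ∃ A B : Set X, MeasurableSet A ∧ MeasurableSet B ∧ δ ≤ μ A ∧ δ ≤ μ B ∧
      ∀ k : ℤ, |k| ≤ (n : ℤ) → μ ((T ^ k) '' A ∩ B) = 0) :
    ¬ ConcentratedOrbit T μ := by
  intro hcon
  obtain ⟨r, hr⟩ := hcon δ hδ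
  obtain ⟨A, B, hA, hB, hμA, hμB, hAB⟩ := h r
  refine (hr A B hA hB hμA hμB).ne' (measure_mono_null ?_ <| measure_iUnion_null fun k =>
    measure_iUnion_null fun hk => (hT k).quasiMeasurePreserving.preimage_null (hAB k hk))
  rintro x ⟨hx, k, hk, hxk⟩
  exact mem_iUnion₂.2 ⟨k, hk, ⟨x, hx, rfl⟩, hxk⟩

end OrbitSeparation

theorem stmt12_general {X : Type*} [MeasurableSpace X] [StandardBorelSpace X]
    (μ : Measure X) [IsProbabilityMeasure μ]
    (T : Equiv.Perm X) (hT : Measurable T) (hT' : Measurable T.symm)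
    (hpres : ∀ A : Set X, MeasurableSet A → μ (T '' A) = μ A)
    (haper : ∀ᵐ x ∂μ, ∀ k : ℤ, k ≠ 0 → (T ^ k) x ≠ x) :
    (∀ n : ℕ, ∀ ε : ℝ≥0∞, 0 < ε →
      ∃ A B : Set X, MeasurableSet A ∧ MeasurableSet B ∧
        1 / 4 - ε ≤ μ A ∧ 1 / 4 - ε ≤ μ B ∧
        ∀ k : ℤ, |k| ≤ (n : ℤ) → μ ((T ^ k) '' A ∩ B) = 0) ∧
    ¬ ConcentratedOrbit T μ := by
  have hTk := Equiv.Perm.measurePreserving_zpow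
    (Equiv.Perm.measurePreserving_of_measure_image_eq hT hpres) hT'
  have hsep := fun n ε (hε : 0 < ε) =>
    OrbitSeparation.exists_separated_of_aperiodic hTk haper n hε
  refine ⟨hsep, OrbitSeparation.not_concentratedOrbit hTk ?_ fun n => hsep n (1 / 8) (by norm_num)⟩
  exact tsub_pos_of_lt (by norm_num)

/-- For an aperiodic measure-preserving automorphism `T` of `(X, μ)`, one can
find, for every `n` and `ε > 0`, two sets of measure at least `1/4 - ε` that are at
`d_T`-distance more than `n`; in particular `(X, d_T, μ)` is not concentrated. -/
theorem stmt12 {X : Type*} [MeasurableSpace X] [StandardBorelSpace X]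
    (μ : Measure X) [IsProbabilityMeasure μ] [NullSingletonClass μ]
    (T : Equiv.Perm X) (hT : Measurable T) (hT' : Measurable T.symm)
    (hpres : ∀ A : Set X, MeasurableSet A → μ (T '' A) = μ A)
    (haper : ∀ᵐ x ∂μ, ∀ k : ℤ, k ≠ 0 → (T ^ k) x ≠ x) :
    (∀ n : ℕ, ∀ ε : ℝ≥0∞, 0 < ε →
      ∃ A B : Set X, MeasurableSet A ∧ MeasurableSet B ∧
        1 / 4 - ε ≤ μ A ∧ 1 / 4 - ε ≤ μ B ∧
        ∀ k : ℤ, |k| ≤ (n : ℤ) → μ ((T ^ k) '' A ∩ B) = 0) ∧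
    ¬ ConcentratedOrbit T μ :=
  stmt12_general μ T hT hT' hpres haper
end

section
/- Let Γ be a countable group acting by Borel automorphisms on a standard Borel space X, and let μ and ν be two equivalent (mutually absolutely continuous) atomless quasi-invariant Borel probability measures on X. Then there exists a nontrivial asymptotically invariant sequence for the action with respect to μ if and only if there exists one with respect to ν; in particular, strong ergodicity of the action depends only on the measure class of μ. -/
/-!
For a finite measure `ν ≪ μ` absolute continuity is uniform: the Radon–Nikodym density of `ν`
is `μ`-integrable, so `μ s < δ` forces `ν s < ε` for every set `s`. Hence for equivalent
probability measures, `μ`-vanishing symmetric differences are `ν`-vanishing, and measures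
bounded away from `0` and `1` for `μ` (apply this to `A n` and its complement) stay so for `ν`:
the same sequence is a nontrivial asymptotically invariant sequence for both measures.
-/

open MeasureTheory Filter Set
open scoped ENNReal

variable {X : Type*} [MeasurableSpace X]

namespace MeasureTheory.Measure.AbsolutelyContinuous

variable {μ ν : Measure X}

theorem exists_pos_measure_lt_of_measure_lt [SigmaFinite μ] [IsFiniteMeasure ν] (h : ν ≪ μ)
    {ε : ℝ≥0∞} (hε : ε ≠ 0) : ∃ δ > 0, ∀ s : Set X, μ s < δ → ν s < ε := by
  have hfin : ∫⁻ x, ν.rnDeriv μ x ∂μ ≠ ∞ :=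
    (Measure.lintegral_rnDeriv_le.trans_lt (measure_lt_top ν univ)).ne
  obtain ⟨δ, hδ, hint⟩ := exists_pos_setLIntegral_lt_of_measure_lt hfin hε
  refine ⟨δ, hδ, fun s hs => ?_⟩
  calc ν s ≤ ν (toMeasurable μ s) := measure_mono (subset_toMeasurable μ s)
    _ = ∫⁻ x in toMeasurable μ s, ν.rnDeriv μ x ∂μ :=
      (Measure.setLIntegral_rnDeriv' h (measurableSet_toMeasurable μ s)).symm
    _ < ε := hint _ (by rwa [measure_toMeasurable])

theorem tendsto_measure_nhds_zero [SigmaFinite μ] [IsFiniteMeasure ν] (h : ν ≪ μ)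
    {ι : Type*} {l : Filter ι} {S : ι → Set X} (hS : Tendsto (fun i => μ (S i)) l (nhds 0)) :
    Tendsto (fun i => ν (S i)) l (nhds 0) := by
  refine ENNReal.tendsto_nhds_zero.2 fun ε hε => ?_
  obtain ⟨δ, hδ, hsmall⟩ := h.exists_pos_measure_lt_of_measure_lt hε.ne'
  filter_upwards [hS (Iio_mem_nhds hδ)] with i hi
  exact (hsmall _ hi).le

end MeasureTheory.Measure.AbsolutelyContinuous

theorem NontrivialSeq.of_absolutelyContinuous {μ ν : Measure X} [IsProbabilityMeasure μ]
    [IsProbabilityMeasure ν] (hμν : μ ≪ ν) {A : ℕ → Set X} (hA : ∀ n, MeasurableSet (A n))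
    (h : NontrivialSeq μ A) : NontrivialSeq ν A := by
  obtain ⟨δ, hδ, hbounds⟩ := h
  obtain ⟨δ', hδ', hsmall⟩ := hμν.exists_pos_measure_lt_of_measure_lt hδ.ne'
  have hlower : ∀ s, δ ≤ μ s → δ' ≤ ν s := fun s hs => not_lt.1 fun hν => (hsmall s hν).not_ge hs
  refine ⟨δ', hδ', fun n => ⟨hlower _ (hbounds n).1, ?_⟩⟩
  have hδ'_ne_top : δ' ≠ ∞ :=
    ne_top_of_le_ne_top (measure_ne_top ν (A n)) (hlower _ (hbounds n).1)
  have hcompl : δ ≤ μ (A n)ᶜ := by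
    rw [prob_compl_eq_one_sub (hA n)]
    calc δ = 1 - (1 - δ) := (ENNReal.sub_sub_cancel ENNReal.one_ne_top
            ((hbounds n).1.trans prob_le_one)).symm
      _ ≤ 1 - μ (A n) := tsub_le_tsub_left (hbounds n).2 1
  refine ENNReal.le_sub_of_add_le_right hδ'_ne_top ?_
  calc ν (A n) + δ' ≤ ν (A n) + ν (A n)ᶜ := by gcongr; exact hlower _ hcompl
    _ = 1 := by rw [measure_add_measure_compl (hA n), measure_univ]

theorem stmt14_general {Γ X : Type*} [Group Γ]
    [MeasurableSpace X]
    (μ ν : Measure X) [IsProbabilityMeasure μ] [IsProbabilityMeasure ν]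
    (α : Γ →* Equiv.Perm X)
    (hequiv : ∀ A : Set X, MeasurableSet A → (μ A = 0 ↔ ν A = 0)) :
    (∃ A : ℕ → Set X, (∀ n, MeasurableSet (A n)) ∧
        (∀ γ : Γ, Tendsto (fun n => μ (symmDiff (α γ '' A n) (A n))) atTop (nhds 0)) ∧
        (∃ δ : ℝ≥0∞, 0 < δ ∧ ∀ n, δ ≤ μ (A n) ∧ μ (A n) ≤ 1 - δ)) ↔
      (∃ A : ℕ → Set X, (∀ n, MeasurableSet (A n)) ∧
        (∀ γ : Γ, Tendsto (fun n => ν (symmDiff (α γ '' A n) (A n))) atTop (nhds 0)) ∧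
        (∃ δ : ℝ≥0∞, 0 < δ ∧ ∀ n, δ ≤ ν (A n) ∧ ν (A n) ≤ 1 - δ)) := by
  have hνμ : ν ≪ μ := Measure.AbsolutelyContinuous.mk fun s hs h0 => (hequiv s hs).1 h0
  have hμν : μ ≪ ν := Measure.AbsolutelyContinuous.mk fun s hs h0 => (hequiv s hs).2 h0
  constructor
  · rintro ⟨A, hA, hinv, hnt⟩
    exact ⟨A, hA, fun γ => hνμ.tendsto_measure_nhds_zero (hinv γ),
      NontrivialSeq.of_absolutelyContinuous hμν hA hnt⟩
  · rintro ⟨A, hA, hinv, hnt⟩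
    exact ⟨A, hA, fun γ => hμν.tendsto_measure_nhds_zero (hinv γ),
      NontrivialSeq.of_absolutelyContinuous hνμ hA hnt⟩

/-- Existence of nontrivial asymptotically invariant sequences for a countable
group action depends only on the measure class of the quasi-invariant probability measure. -/
theorem stmt14 {Γ X : Type*} [Group Γ] [Countable Γ]
    [MeasurableSpace X] [StandardBorelSpace X]
    (μ ν : Measure X) [IsProbabilityMeasure μ] [IsProbabilityMeasure ν]
    [NullSingletonClass μ] [NullSingletonClass ν]
    (α : Γ →* Equiv.Perm X) (hmeas : ∀ γ : Γ, Measurable (α γ))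
    (hqiμ : ∀ γ : Γ, ∀ A : Set X, MeasurableSet A → (μ A = 0 ↔ μ (α γ '' A) = 0))
    (hqiν : ∀ γ : Γ, ∀ A : Set X, MeasurableSet A → (ν A = 0 ↔ ν (α γ '' A) = 0))
    (hequiv : ∀ A : Set X, MeasurableSet A → (μ A = 0 ↔ ν A = 0)) :
    (∃ A : ℕ → Set X, (∀ n, MeasurableSet (A n)) ∧
        (∀ γ : Γ, Tendsto (fun n => μ (symmDiff (α γ '' A n) (A n))) atTop (nhds 0)) ∧
        (∃ δ : ℝ≥0∞, 0 < δ ∧ ∀ n, δ ≤ μ (A n) ∧ μ (A n) ≤ 1 - δ)) ↔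
      (∃ A : ℕ → Set X, (∀ n, MeasurableSet (A n)) ∧
        (∀ γ : Γ, Tendsto (fun n => ν (symmDiff (α γ '' A n) (A n))) atTop (nhds 0)) ∧
        (∃ δ : ℝ≥0∞, 0 < δ ∧ ∀ n, δ ≤ ν (A n) ∧ ν (A n) ≤ 1 - δ)) :=
  stmt14_general μ ν α hequiv
end
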